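/- arXiv:0707.2949 — 5 statements merged into one kernel-verified Lean document; each statement's English description precedes it below -/
import Mathlib

section
/- Let d, ℓ be positive integers with gcd(ℓ, d) = 1 and ℓ greater than every non-trivial divisor of d (every divisor of d other than d itself). Then any transitive permutation group G on a set of size d containing an ℓ-cycle is primitive. -/
open Pointwise

/-- If `gcd(ℓ,d) = 1` and `ℓ` is greater than every divisor of `d` other than `d`
itself, then any transitive permutation group on `d` points containing an
`ℓ`-cycle is primitive. -/
theorem stmt_1 (d ℓ : ℕ) (hd : 0 < d) (hl : 0 < ℓ)
    (hcop : Nat.gcd ℓ d = 1)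
    (hmax : ∀ k : ℕ, k ∣ d → k ≠ d → k < ℓ)
    {Ω : Type*} [Fintype Ω] [DecidableEq Ω] (hcard : Fintype.card Ω = d)
    (G : Subgroup (Equiv.Perm Ω)) (hT : MulAction.IsPretransitive G Ω)
    (g : Equiv.Perm Ω) (hg : g ∈ G) (hcyc : g.cycleType = {ℓ}) :
    ∀ B : Set Ω, MulAction.IsBlock G B → B.Nonempty → MulAction.IsTrivialBlock B := by
  classical
  intro B hB hBne
  by_cases hU : B = Set.univ
  · right; exact hU
  -- basic facts about g
  have hl2 : 2 ≤ ℓ := Equiv.Perm.two_le_of_mem_cycleType (by rw [hcyc]; simp)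
  have hsupp : g.support.card = ℓ := by
    have := g.sum_cycleType; rw [hcyc] at this; simpa using this.symm
  have hcycle : g.IsCycle := by
    rw [← Equiv.Perm.card_cycleType_eq_one, hcyc]; rfl
  have horder : orderOf g = ℓ := by
    have := g.lcm_cycleType; rw [hcyc] at this; simpa using this.symm
  obtain ⟨x₀, hx₀⟩ := hBne
  obtain ⟨x, hx⟩ := Finset.card_pos.mp (show 0 < g.support.card by omega)
  obtain ⟨k, hk⟩ := hT.exists_smul_eq x₀ x
  set gG : G := ⟨g, hg⟩ with hgG
  set B' : Set Ω := k • B with hB'def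
  have hBlk' : MulAction.IsBlock G B' := hB.translate k
  have hxB' : x ∈ B' := by
    rw [hB'def, ← hk]; exact Set.smul_mem_smul_set hx₀
  have hcard' : B'.ncard = B.ncard := Set.ncard_smul_set k B
  have hsmul_pt : ∀ (i : ℕ) (y : Ω), (gG ^ i) • y = (g ^ i) y := by
    intro i y; rfl
  -- same cycle facts
  have hSC : ∀ y ∈ g.support, ∃ i < ℓ, (g ^ i) x = y := by
    intro y hy
    obtain ⟨z, hz, hzall⟩ := hcycle
    have h1 : g.SameCycle x y :=
      ((hzall (Equiv.Perm.mem_support.mp hx)).symm.trans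
        (hzall (Equiv.Perm.mem_support.mp hy)))
    obtain ⟨i, hi, hiy⟩ := h1.exists_pow_eq'
    exact ⟨i, horder ▸ hi, hiy⟩
  by_cases hfix : gG • B' = B'
  · -- support ⊆ B', so ℓ ≤ |B| < ℓ
    exfalso
    have hstab : ∀ i : ℕ, (gG ^ i) • B' = B' := by
      intro i
      induction i with
      | zero => simp
      | succ n ih => rw [pow_succ, mul_smul, hfix, ih]
    have hSB' : (g.support : Set Ω) ⊆ B' := by
      intro y hy
      obtain ⟨i, _, hiy⟩ := hSC y hy
      have : (gG ^ i) • x ∈ (gG ^ i) • B' := Set.smul_mem_smul_set hxB'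
      rwa [hstab i, hsmul_pt, hiy] at this
    have h1 : ℓ ≤ B.ncard := by
      have := Set.ncard_le_ncard hSB' (Set.toFinite B')
      rwa [hcard', Set.ncard_coe_finset, hsupp] at this
    have hdvd : B.ncard ∣ d := by
      have := hB.ncard_dvd_card ⟨x₀, hx₀⟩
      rwa [Nat.card_eq_fintype_card, hcard] at this
    have hne : B.ncard ≠ d := by
      intro h
      apply hU
      apply Set.eq_of_subset_of_ncard_le (Set.subset_univ B)
      rw [Set.ncard_univ, Nat.card_eq_fintype_card, hcard, h]
    exact absurd (hmax _ hdvd hne) (by omega)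
  · -- B' ⊆ support, translates of B' partition the support, so |B| ∣ ℓ
    left
    have hdisj : Disjoint (gG • B') B' :=
      ((MulAction.isBlock_iff_smul_eq_or_disjoint.mp hBlk') gG).resolve_left hfix
    have hB'S : B' ⊆ (g.support : Set Ω) := by
      intro y hy
      by_contra h
      have hgy : g y = y := by
        by_contra h'
        exact h (Equiv.Perm.mem_support.mpr h')
      have hy' : y ∈ gG • B' := ⟨y, hy, hgy⟩
      exact (hdisj.le_bot ⟨hy', hy⟩).elim
    -- counting
    have hB'fin : B'.Finite := Set.toFinite B'
    set Bf : Finset Ω := hB'fin.toFinset with hBf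
    have hBfcard : Bf.card = B.ncard := by
      rw [hBf, ← Set.ncard_eq_toFinset_card B' hB'fin, hcard']
    set f : ℕ → Finset Ω := fun i => Bf.image (g ^ i) with hf
    have hfcoe : ∀ i, (f i : Set Ω) = (gG ^ i) • B' := by
      intro i
      simp only [hf, Finset.coe_image, Set.Finite.coe_toFinset, hBf]
      ext y
      constructor
      · rintro ⟨z, hz, rfl⟩; exact ⟨z, hz, rfl⟩
      · rintro ⟨z, hz, rfl⟩; exact ⟨z, hz, rfl⟩
    have hfcard : ∀ i, (f i).card = B.ncard := by
      intro i
      rw [hf]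
      simp only []
      rw [Finset.card_image_of_injective _ (g ^ i).injective, hBfcard]
    have hfdisj : ∀ i j : ℕ, f i ≠ f j → Disjoint (f i) (f j) := by
      intro i j hij
      rw [← Finset.disjoint_coe, hfcoe i, hfcoe j]
      apply hBlk'
      rw [← hfcoe i, ← hfcoe j]
      exact fun h => hij (Finset.coe_injective h)
    have hcover : g.support = (Finset.range ℓ).biUnion f := by
      ext y
      simp only [Finset.mem_biUnion, Finset.mem_range]
      constructor
      · intro hy
        obtain ⟨i, hi, hiy⟩ := hSC y hy
        refine ⟨i, hi, ?_⟩
        exact Finset.mem_image.mpr ⟨x, by simpa [hBf] using hxB', hiy⟩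
      · rintro ⟨i, _, hyi⟩
        obtain ⟨z, hz, rfl⟩ := Finset.mem_image.mp hyi
        have hz' : z ∈ g.support := hB'S (by simpa [hBf] using hz)
        exact Equiv.Perm.pow_apply_mem_support.mpr hz'
    set T : Finset (Finset Ω) := (Finset.range ℓ).image f with hT'
    have hTb : (Finset.range ℓ).biUnion f = T.biUnion id := by
      ext y
      simp only [hT', Finset.mem_biUnion, Finset.mem_image, id_eq]
      constructor
      · rintro ⟨i, hi, hy⟩; exact ⟨f i, ⟨i, hi, rfl⟩, hy⟩
      · rintro ⟨u, ⟨i, hi, rfl⟩, hy⟩; exact ⟨i, hi, hy⟩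
    have hTdisj : ∀ u ∈ T, ∀ v ∈ T, u ≠ v → Disjoint (id u) (id v) := by
      intro u hu v hv huv
      obtain ⟨i, _, rfl⟩ := Finset.mem_image.mp hu
      obtain ⟨j, _, rfl⟩ := Finset.mem_image.mp hv
      exact hfdisj i j huv
    have hcount : ℓ = T.card * B.ncard := by
      have h := Finset.card_biUnion hTdisj
      have h2 : ∀ u ∈ T, (id u).card = B.ncard := by
        intro u hu
        obtain ⟨i, _, rfl⟩ := Finset.mem_image.mp hu
        exact hfcard i
      calc ℓ = g.support.card := hsupp.symm
        _ = (T.biUnion id).card := by rw [hcover, hTb]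
        _ = ∑ u ∈ T, (id u).card := h
        _ = T.card * B.ncard := Finset.sum_const_nat h2
    have hdvdl : B.ncard ∣ ℓ := Dvd.intro_left _ hcount.symm
    have hdvdd : B.ncard ∣ d := by
      have := hB.ncard_dvd_card ⟨x₀, hx₀⟩
      rwa [Nat.card_eq_fintype_card, hcard] at this
    have h1 : B.ncard ≤ 1 := Nat.le_of_dvd one_pos (hcop ▸ Nat.dvd_gcd hdvdl hdvdd)
    intro a ha b hb
    exact (Set.ncard_le_one (Set.toFinite B)).mp h1 a ha b hb
end

section
/- If d = 2ℓ + 1 or d = 2ℓ - 1 with ℓ ≥ 2, then gcd(ℓ, d) = 1 and ℓ is greater than every proper divisor of d; consequently any transitive permutation group on d points containing an ℓ-cycle is primitive. -/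
open Pointwise


/-- If `d = 2ℓ+1` or `d = 2ℓ-1` with `ℓ ≥ 2`, then `gcd(ℓ,d) = 1`, `ℓ` exceeds
every proper divisor of `d`, and any transitive permutation group on `d` points
containing an `ℓ`-cycle is primitive. -/
theorem stmt_2 (ℓ d : ℕ) (hl : 2 ≤ ℓ) (hd : d = 2 * ℓ + 1 ∨ d = 2 * ℓ - 1) :
    Nat.gcd ℓ d = 1 ∧
    (∀ k : ℕ, k ∣ d → k < d → k < ℓ) ∧
    (∀ (Ω : Type) (_ : Fintype Ω) (_ : DecidableEq Ω),
      Fintype.card Ω = d →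
      ∀ G : Subgroup (Equiv.Perm Ω), MulAction.IsPretransitive G Ω →
      ∀ g : Equiv.Perm Ω, g ∈ G → g.cycleType = {ℓ} →
      ∀ B : Set Ω, MulAction.IsBlock G B → B.Nonempty → MulAction.IsTrivialBlock B) := by
  have hd3 : 3 ≤ d := by omega
  have hodd : d % 2 = 1 := by omega
  have hgcd : Nat.gcd ℓ d = 1 := by
    have h2l : Nat.gcd ℓ d ∣ 2 * ℓ := Dvd.dvd.mul_left (Nat.gcd_dvd_left ℓ d) 2
    have hdd : Nat.gcd ℓ d ∣ d := Nat.gcd_dvd_right ℓ d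
    have h1 : Nat.gcd ℓ d ∣ 1 := by
      rcases hd with h | h
      · have := Nat.dvd_sub hdd h2l
        have e : d - 2 * ℓ = 1 := by omega
        rwa [e] at this
      · have := Nat.dvd_sub h2l hdd
        have e : 2 * ℓ - d = 1 := by omega
        rwa [e] at this
    exact Nat.dvd_one.mp h1
  have hdiv : ∀ k : ℕ, k ∣ d → k < d → k < ℓ := by
    intro k hk hkd
    obtain ⟨c, hc⟩ := hk
    have hc3 : 3 ≤ c := by
      rcases c with _ | _ | _ | c
      · omega
      · simp at hc; omega
      · omega
      · omega
    have h3k : k * 3 ≤ k * c := Nat.mul_le_mul_left k hc3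
    rw [← hc] at h3k
    omega
  refine ⟨hgcd, hdiv, ?_⟩
  intro Ω _ _ hcard G hGtrans g hgG hcyc B hB hBne
  have hgc : g.IsCycle := Equiv.Perm.card_cycleType_eq_one.mp (by rw [hcyc]; rfl)
  have hsupp : g.support.card = ℓ := by
    have := Equiv.Perm.sum_cycleType g
    rw [hcyc] at this
    simpa using this.symm
  by_cases htop : B = Set.univ
  · exact Or.inr htop
  left
  rw [← Set.not_nontrivial_iff]
  intro hBnt
  have hfin : B.Finite := Set.toFinite B
  have hm2 : 1 < B.ncard := (Set.one_lt_ncard hfin).mpr hBnt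
  have hmd : B.ncard ∣ d := by
    have := hB.ncard_dvd_card hBne
    rwa [Nat.card_eq_fintype_card, hcard] at this
  have hmlt : B.ncard < d := by
    have hss : B ⊂ Set.univ := Set.ssubset_univ_iff.mpr htop
    have := Set.ncard_lt_ncard hss Set.finite_univ
    rwa [Set.ncard_univ, Nat.card_eq_fintype_card, hcard] at this
  have hml : B.ncard < ℓ := hdiv _ hmd hmlt
  obtain ⟨a, haB⟩ := hBne
  have hSpos : 0 < g.support.card := by omega
  obtain ⟨x, hx⟩ := Finset.card_pos.mp hSpos
  obtain ⟨h, hh⟩ := hGtrans.exists_smul_eq a x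
  set B' : Set Ω := h • B with hB'def
  have hB' : MulAction.IsBlock G B' := by rw [hB'def]; exact hB.translate h
  have hcardB' : B'.ncard = B.ncard := by rw [hB'def]; exact Set.ncard_smul_set h B
  have hxB' : x ∈ B' := by rw [hB'def, ← hh]; exact Set.smul_mem_smul_set haB
  set g' : G := ⟨g, hgG⟩ with hg'
  have hsmul : ∀ (k : ℤ) (y : Ω), (g' ^ k) • y = (g ^ k) y := by
    intro k y
    rfl
  -- every element of B' is in the support of g
  have hkey : ∀ y ∈ B', y ∈ g.support := by
    intro y hyB'
    by_contra hy
    have hgy : g y = y := Equiv.Perm.notMem_support.mp hy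
    have hgyB' : g' • y ∈ B' := by
      have : g' • y = y := hgy
      rw [this]; exact hyB'
    have hstab : g' • B' = B' := hB'.smul_eq_of_mem hyB' hgyB'
    have hzstab : ∀ k : ℤ, (g' ^ k) • B' = B' := by
      intro k
      have hmem : g' ∈ MulAction.stabilizer G B' := hstab
      exact Subgroup.zpow_mem _ hmem k
    have hSsub : (g.support : Set Ω) ⊆ B' := by
      intro z hz
      obtain ⟨k, hk⟩ := hgc.sameCycle (Equiv.Perm.mem_support.mp hx)
        (Equiv.Perm.mem_support.mp (by simpa using hz))
      rw [← hzstab k]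
      exact ⟨x, hxB', hk⟩
    have hle : ℓ ≤ B'.ncard := by
      have := Set.ncard_le_ncard hSsub (Set.toFinite B')
      rwa [Set.ncard_coe_finset, hsupp] at this
    omega
  -- B' is contained in the support, so its cardinality divides ℓ
  set H : Subgroup G := Subgroup.zpowers g' with hH
  set C : SubMulAction H Ω :=
    { carrier := (g.support : Set Ω)
      smul_mem' := by
        rintro ⟨c, hc⟩ y hy
        obtain ⟨k, rfl⟩ := Subgroup.mem_zpowers_iff.mp hc
        have : (⟨g' ^ k, hc⟩ : H) • y = (g ^ k) y := rfl
        rw [this]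
        exact (Equiv.Perm.zpow_apply_mem_support (f := g) (n := k) (x := y)).mpr hy } with hC
  haveI : MulAction.IsPretransitive H C := by
    constructor
    rintro ⟨y, hy⟩ ⟨z, hz⟩
    obtain ⟨k, hk⟩ := hgc.sameCycle
      (Equiv.Perm.mem_support.mp (show y ∈ g.support from hy))
      (Equiv.Perm.mem_support.mp (show z ∈ g.support from hz))
    refine ⟨⟨g' ^ k, Subgroup.zpow_mem_zpowers g' k⟩, ?_⟩
    apply Subtype.ext
    exact hk
  have hBH : MulAction.IsBlock H B' := hB'.subgroup
  have hBC : MulAction.IsBlock H (Subtype.val ⁻¹' B' : Set C) := hBH.subtype_val_preimage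
  have hne : (Subtype.val ⁻¹' B' : Set C).Nonempty := ⟨⟨x, hx⟩, hxB'⟩
  have hdvd := hBC.ncard_dvd_card hne
  have hcC : Nat.card C = ℓ := by
    have e : (C : Type) ≃ ((g.support : Set Ω) : Type) :=
      Equiv.subtypeEquivRight (fun _ => Iff.rfl)
    rw [Nat.card_congr e, Nat.card_coe_set_eq, Set.ncard_coe_finset, hsupp]
  have himg : (Subtype.val '' (Subtype.val ⁻¹' B' : Set C) : Set Ω) = B' := by
    rw [Set.image_preimage_eq_inter_range, Subtype.range_coe_subtype]
    exact Set.inter_eq_self_of_subset_left (fun y hy => hkey y hy)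
  have hncard : (Subtype.val ⁻¹' B' : Set C).ncard = B'.ncard := by
    conv_rhs => rw [← himg]
    rw [Set.ncard_image_of_injective _ Subtype.val_injective]
  rw [hncard, hcardB', hcC] at hdvd
  have h1 : B.ncard ∣ 1 := hgcd ▸ Nat.dvd_gcd hdvd hmd
  have := Nat.dvd_one.mp h1
  omega
end

section
/- Let d = 2t with t even, let α = (1 2)(3 4)···(2t-1 2t) ∈ Σ_{2t}, and let β be the d-cycle (1 3 5 ... 2t-1 4)(2 6 8 ... 2t) consisting of two cycles: one of length t+1 listing the odd numbers in increasing order followed by 4, and one of length t-1 listing the even numbers other than 4 in increasing order. Then the group generated by α and β is transitive. -/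
/-!
Only `α` and the first cycle `(1 3 5 … 2t-1 4)` of `β` matter: the powers of `β` carry point `1` to
every odd point `2k + 1`, and `α` then moves `2k + 1` to `2k + 2`.
-/

open Equiv MulAction

theorem Subgroup.exists_mem_apply_eq_of_isPretransitive {X : Type*} (H : Subgroup (Perm X))
    [IsPretransitive H X] (x y : X) : ∃ g ∈ H, g x = y := by
  obtain ⟨g, hg⟩ := MulAction.exists_smul_eq H x y
  exact ⟨g, g.2, hg⟩

section

variable {d : ℕ} [NeZero d] {H : Subgroup (Perm (Fin d))} {α β : Perm (Fin d)}

theorem Fin.two_mul_mem_orbit_zero (hβ : β ∈ H)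
    (hβ_succ : ∀ i : Fin d, (i : ℕ) % 2 = 0 → (i : ℕ) < d - 2 → (β i : ℕ) = (i : ℕ) + 2) :
    ∀ k (hk : 2 * k < d), (⟨2 * k, hk⟩ : Fin d) ∈ orbit H 0
  | 0, _ => mem_orbit_self _
  | k + 1, hk => by
    have hβk : β ⟨2 * k, by omega⟩ = ⟨2 * (k + 1), hk⟩ :=
      Fin.ext <| hβ_succ _ (by simp) (by simp only; omega)
    rw [← hβk]
    exact mem_orbit_of_mem_orbit (⟨β, hβ⟩ : H) (two_mul_mem_orbit_zero hβ hβ_succ k (by omega))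

theorem Fin.isPretransitive_of_swap_pairs_of_add_two (hα : α ∈ H) (hβ : β ∈ H)
    (hα_succ : ∀ i : Fin d, (i : ℕ) % 2 = 0 → (α i : ℕ) = (i : ℕ) + 1)
    (hβ_succ : ∀ i : Fin d, (i : ℕ) % 2 = 0 → (i : ℕ) < d - 2 → (β i : ℕ) = (i : ℕ) + 2) :
    IsPretransitive H (Fin d) := by
  refine (isPretransitive_iff_orbit_eq_univ (0 : Fin d)).2 (Set.eq_univ_of_forall fun ⟨n, hn⟩ ↦ ?_)
  obtain ⟨k, rfl | rfl⟩ := Nat.even_or_odd' n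
  · exact two_mul_mem_orbit_zero hβ hβ_succ k hn
  · have hαk : α ⟨2 * k, by omega⟩ = ⟨2 * k + 1, hn⟩ := Fin.ext <| hα_succ _ (by simp)
    rw [← hαk]
    exact mem_orbit_of_mem_orbit (⟨α, hα⟩ : H) (two_mul_mem_orbit_zero hβ hβ_succ k (by omega))

end

theorem stmt_10_general (d : ℕ)
    (α β : Equiv.Perm (Fin d))
    (hα : ∀ i : Fin d,
      ((i : ℕ) % 2 = 0 → ((α i : ℕ) = (i : ℕ) + 1)) ∧
      ((i : ℕ) % 2 = 1 → ((α i : ℕ) = (i : ℕ) - 1)))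
    (hβ₁ : ∀ i : Fin d, (i : ℕ) % 2 = 0 → (i : ℕ) < d - 2 → (β i : ℕ) = (i : ℕ) + 2) :
    ∀ x y : Fin d, ∃ g ∈ Subgroup.closure ({α, β} : Set (Equiv.Perm (Fin d))),
      g x = y := by
  intro x y
  have : NeZero d := ⟨x.pos.ne'⟩
  have := Fin.isPretransitive_of_swap_pairs_of_add_two
    (Subgroup.subset_closure (Set.mem_insert α {β}))
    (Subgroup.subset_closure (Set.mem_insert_of_mem α rfl)) (fun i ↦ (hα i).1) hβ₁
  exact Subgroup.exists_mem_apply_eq_of_isPretransitive _ x y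

/-- Let `d = 2t` with `t` even, let `α = (1 2)(3 4)⋯(2t-1 2t)` and let
`β = (1 3 5 … 2t-1 4)(2 6 8 … 2t)`.  Then `⟨α, β⟩` is transitive.
Points `1,…,2t` are encoded as `Fin d` (point `p` is the index `p - 1`),
and `α`, `β` are described by their values:
`α` swaps each even index with its successor; `β` sends each even index
`i < d-2` to `i+2` (the odd points increase by `2`), index `d-2` (point `2t-1`)
to index `3` (point `4`), index `3` to index `0` (point `4` to point `1`),
index `1` to index `5` (point `2` to point `6`), each odd index
`5 ≤ i < d-1` to `i+2`, and index `d-1` (point `2t`) to index `1` (point `2`). -/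
theorem stmt_10 (t d : ℕ) (ht : Even t) (ht0 : 0 < t) (hd : d = 2 * t)
    (α β : Equiv.Perm (Fin d))
    (hα : ∀ i : Fin d,
      ((i : ℕ) % 2 = 0 → ((α i : ℕ) = (i : ℕ) + 1)) ∧
      ((i : ℕ) % 2 = 1 → ((α i : ℕ) = (i : ℕ) - 1)))
    (hβ₁ : ∀ i : Fin d, (i : ℕ) % 2 = 0 → (i : ℕ) < d - 2 → (β i : ℕ) = (i : ℕ) + 2)
    (hβ₂ : ∀ i : Fin d, (i : ℕ) = d - 2 → (β i : ℕ) = 3)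
    (hβ₃ : ∀ i : Fin d, (i : ℕ) = 3 → (β i : ℕ) = 0)
    (hβ₄ : ∀ i : Fin d, (i : ℕ) = 1 → (β i : ℕ) = 5)
    (hβ₅ : ∀ i : Fin d, (i : ℕ) % 2 = 1 → 5 ≤ (i : ℕ) → (i : ℕ) < d - 1 →
      (β i : ℕ) = (i : ℕ) + 2)
    (hβ₆ : ∀ i : Fin d, (i : ℕ) = d - 1 → (β i : ℕ) = 1) :
    ∀ x y : Fin d, ∃ g ∈ Subgroup.closure ({α, β} : Set (Equiv.Perm (Fin d))),
      g x = y :=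
  stmt_10_general d α β hα hβ₁
end

section
/- Let G be a transitive permutation group on {1,...,d} containing a permutation β that is the product of two disjoint cycles of coprime lengths t+1 and t-1 (with d = 2t). If every non-trivial block of G containing the point 1 must be contained in the β-orbit of 1 or contain points of both cycles of β, then all blocks of G are trivial, i.e., G is primitive. -/
open MulAction Set Equiv Pointwise

lemma aux_trivial_smul {G X : Type*} [Group G] [MulAction G X] (g : G) (S : Set X)
    (h : MulAction.IsTrivialBlock (g • S)) : MulAction.IsTrivialBlock S := by
  rcases h with h | h
  · left
    intro a ha b hb
    exact MulAction.injective g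
      (h (Set.smul_mem_smul_set ha) (Set.smul_mem_smul_set hb))
  · right
    have : g⁻¹ • (g • S) = g⁻¹ • (Set.univ : Set X) := by rw [h]
    simpa [Set.smul_set_univ] using this

lemma aux_orbit_eq {Ω : Type*} (β : Equiv.Perm Ω) (x : Ω) :
    MulAction.orbit (Subgroup.zpowers β) x = {y : Ω | ∃ k : ℤ, (β ^ k) x = y} := by
  ext y
  simp only [MulAction.mem_orbit_iff, Set.mem_setOf_eq]
  constructor
  · rintro ⟨⟨g, k, rfl⟩, rfl⟩
    exact ⟨k, rfl⟩
  · rintro ⟨k, rfl⟩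
    exact ⟨⟨β ^ k, k, rfl⟩, rfl⟩

lemma aux_key {Ω : Type*} [Fintype Ω] (β : Equiv.Perm Ω) (x : Ω) (n : ℕ)
    (h : {y : Ω | ∃ k : ℤ, (β ^ k) x = y}.ncard = n) : (β ^ n) x = x := by
  classical
  have horb := aux_orbit_eq β x
  have hmin : Function.minimalPeriod (β • ·) x = n := by
    have inst : Fintype (MulAction.orbit (Subgroup.zpowers β) x) := Fintype.ofFinite _
    rw [MulAction.minimalPeriod_eq_card, ← Nat.card_eq_fintype_card, horb,
      Nat.card_coe_set_eq, h]
  have := MulAction.pow_period_smul β x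
  rw [MulAction.period_eq_minimalPeriod, hmin] at this
  simpa using this

/-- Let `G` be a transitive permutation group on a set `Ω` of size `d = 2t`
containing a permutation `β` which is the product of two disjoint cycles, of
coprime lengths `t+1` and `t-1` (with supports `A` and `B`, and `x₀` — the
point `1` — lying in the long cycle `A`).  If every non-trivial block of `G`
containing `x₀` must be contained in the `β`-orbit of `x₀` or contain points of
both cycles of `β`, then all blocks of `G` are trivial, i.e. `G` is primitive. -/
theorem stmt_11 {Ω : Type*} [Fintype Ω] (t d : ℕ) (ht : 0 < t) (hd : d = 2 * t)
    (hcard : Fintype.card Ω = d) (hcop : Nat.Coprime (t + 1) (t - 1))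
    (G : Subgroup (Equiv.Perm Ω)) (hT : MulAction.IsPretransitive G Ω)
    (β : Equiv.Perm Ω) (hβG : β ∈ G)
    (A B : Set Ω) (hdisj : Disjoint A B) (hunion : A ∪ B = Set.univ)
    (hAcard : A.ncard = t + 1) (hBcard : B.ncard = t - 1)
    (hAorbit : ∀ x ∈ A, {y : Ω | ∃ k : ℤ, (β ^ k) x = y} = A)
    (hBorbit : ∀ x ∈ B, {y : Ω | ∃ k : ℤ, (β ^ k) x = y} = B)
    (x₀ : Ω) (hx₀ : x₀ ∈ A)
    (hblocks : ∀ Λ : Set Ω, MulAction.IsBlock G Λ → x₀ ∈ Λ →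
      ¬ MulAction.IsTrivialBlock Λ →
      Λ ⊆ {y : Ω | ∃ k : ℤ, (β ^ k) x₀ = y} ∨
        ((Λ ∩ A).Nonempty ∧ (Λ ∩ B).Nonempty)) :
    ∀ Λ : Set Ω, MulAction.IsBlock G Λ → Λ.Nonempty →
      MulAction.IsTrivialBlock Λ := by
  classical
  haveI := hT
  -- arithmetic facts
  have htne1 : t ≠ 1 := by
    rintro rfl
    simp [Nat.Coprime] at hcop
  have hteven : t % 2 = 0 := by
    by_contra hodd
    have h1 : 2 ∣ t + 1 := by omega
    have h2 : 2 ∣ t - 1 := by omega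
    have h3 := Nat.dvd_gcd h1 h2
    rw [Nat.Coprime] at hcop
    rw [hcop] at h3
    omega
  have ht2 : 2 ≤ t := by omega
  -- the distinguished group element
  set gβ : G := ⟨β, hβG⟩ with hgβ
  have hcoe_pow : ∀ n : ℕ, ((gβ ^ n : G) : Equiv.Perm Ω) = β ^ n := fun n => rfl
  have hcoe_zpow : ∀ k : ℤ, ∀ g : G, (((g ^ k : G)) : Equiv.Perm Ω) = (g : Equiv.Perm Ω) ^ k :=
    fun k g => SubgroupClass.coe_zpow g k
  have hsmul : ∀ (g : G) (x : Ω), g • x = (g : Equiv.Perm Ω) x := fun _ _ => rfl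
  -- fixed point facts
  have hfixA : ∀ x ∈ A, (β ^ (t + 1)) x = x := fun x hx =>
    aux_key β x (t + 1) (by rw [hAorbit x hx]; exact hAcard)
  have hfixB : ∀ x ∈ B, (β ^ (t - 1)) x = x := fun x hx =>
    aux_key β x (t - 1) (by rw [hBorbit x hx]; exact hBcard)
  -- Bezout
  obtain ⟨u, v, huv⟩ : ∃ u v : ℤ, u * (t + 1 : ℕ) + v * (t - 1 : ℕ) = 1 := by
    have := Nat.isCoprime_iff_coprime.mpr hcop
    exact this
  -- transitivity of β^(t-1) on A from any point of A
  have htransA : ∀ x₁ ∈ A, ∀ x ∈ A, ∃ k : ℤ, ((β ^ (t - 1) : Equiv.Perm Ω) ^ k) x₁ = x := by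
    intro x₁ hx₁ x hx
    have hxmem : x ∈ {y : Ω | ∃ k : ℤ, (β ^ k) x₁ = y} := by rw [hAorbit x₁ hx₁]; exact hx
    obtain ⟨m, hm⟩ := hxmem
    refine ⟨m * v, ?_⟩
    have hdecomp : ((t - 1 : ℕ) : ℤ) * (m * v) + ((t + 1 : ℕ) : ℤ) * (m * u) = m := by
      linear_combination m * huv
    have e1 : (β ^ (((t + 1 : ℕ) : ℤ) * (m * u))) x₁ = x₁ := by
      rw [zpow_mul, zpow_natCast β (t + 1)]
      exact Equiv.Perm.zpow_apply_eq_self_of_apply_eq_self (hfixA x₁ hx₁) (m * u)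
    have e2 : ((β ^ (t - 1) : Equiv.Perm Ω) ^ (m * v))
        = β ^ (((t - 1 : ℕ) : ℤ) * (m * v)) := by
      rw [← zpow_natCast β (t - 1)]
      exact (zpow_mul β _ _).symm
    calc ((β ^ (t - 1) : Equiv.Perm Ω) ^ (m * v)) x₁
        = (β ^ (((t - 1 : ℕ) : ℤ) * (m * v))) x₁ := by rw [e2]
      _ = (β ^ (((t - 1 : ℕ) : ℤ) * (m * v))) ((β ^ (((t + 1 : ℕ) : ℤ) * (m * u))) x₁) := by
          rw [e1]
      _ = (β ^ (((t - 1 : ℕ) : ℤ) * (m * v) + ((t + 1 : ℕ) : ℤ) * (m * u))) x₁ := by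
          rw [zpow_add, Equiv.Perm.mul_apply]
      _ = (β ^ m) x₁ := by rw [hdecomp]
      _ = x := hm
  -- transitivity of β^(t+1) on B from any point of B
  have htransB : ∀ x₁ ∈ B, ∀ x ∈ B, ∃ k : ℤ, ((β ^ (t + 1) : Equiv.Perm Ω) ^ k) x₁ = x := by
    intro x₁ hx₁ x hx
    have hxmem : x ∈ {y : Ω | ∃ k : ℤ, (β ^ k) x₁ = y} := by rw [hBorbit x₁ hx₁]; exact hx
    obtain ⟨m, hm⟩ := hxmem
    refine ⟨m * u, ?_⟩
    have hdecomp : ((t + 1 : ℕ) : ℤ) * (m * u) + ((t - 1 : ℕ) : ℤ) * (m * v) = m := by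
      linear_combination m * huv
    have e1 : (β ^ (((t - 1 : ℕ) : ℤ) * (m * v))) x₁ = x₁ := by
      rw [zpow_mul, zpow_natCast β (t - 1)]
      exact Equiv.Perm.zpow_apply_eq_self_of_apply_eq_self (hfixB x₁ hx₁) (m * v)
    have e2 : ((β ^ (t + 1) : Equiv.Perm Ω) ^ (m * u))
        = β ^ (((t + 1 : ℕ) : ℤ) * (m * u)) := by
      rw [← zpow_natCast β (t + 1)]
      exact (zpow_mul β _ _).symm
    calc ((β ^ (t + 1) : Equiv.Perm Ω) ^ (m * u)) x₁
        = (β ^ (((t + 1 : ℕ) : ℤ) * (m * u))) x₁ := by rw [e2]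
      _ = (β ^ (((t + 1 : ℕ) : ℤ) * (m * u))) ((β ^ (((t - 1 : ℕ) : ℤ) * (m * v))) x₁) := by
          rw [e1]
      _ = (β ^ (((t + 1 : ℕ) : ℤ) * (m * u) + ((t - 1 : ℕ) : ℤ) * (m * v))) x₁ := by
          rw [zpow_add, Equiv.Perm.mul_apply]
      _ = (β ^ m) x₁ := by rw [hdecomp]
      _ = x := hm
  -- main argument
  intro Λ hΛ hne
  by_contra hnt
  obtain ⟨y, hy⟩ := hne
  obtain ⟨g, hg⟩ := hT.exists_smul_eq y x₀
  set Λ' : Set Ω := g • Λ with hΛ'def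
  have hΛ'block : MulAction.IsBlock G Λ' := hΛ.translate g
  have hx₀Λ' : x₀ ∈ Λ' := hg ▸ Set.smul_mem_smul_set hy
  have hnt' : ¬ MulAction.IsTrivialBlock Λ' := fun h => hnt (aux_trivial_smul g Λ h)
  rcases hblocks Λ' hΛ'block hx₀Λ' hnt' with hsub | ⟨⟨a₀, ha₀Λ, ha₀A⟩, ⟨b₀, hb₀Λ, hb₀B⟩⟩
  · -- Case 1 : Λ' ⊆ A ; counting gives |Λ'| = 1
    rw [hAorbit x₀ hx₀] at hsub
    apply hnt'
    have hne' : Λ'.Nonempty := ⟨x₀, hx₀Λ'⟩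
    have hdvd1 : Λ'.ncard ∣ 2 * t := by
      have := hΛ'block.ncard_dvd_card hne'
      rwa [Nat.card_eq_fintype_card, hcard, hd] at this
    -- restrict to A
    have hdvd2 : Λ'.ncard ∣ t + 1 := by
      set H : Subgroup G := Subgroup.zpowers gβ with hH
      have hsmulmem : ∀ (c : H) (x : Ω), x ∈ A → (c : G) • x ∈ A := by
        rintro ⟨c, k, rfl⟩ x hx
        have : ((gβ ^ k : G) : Equiv.Perm Ω) = β ^ k := by
          rw [hcoe_zpow]
        rw [hsmul, this]
        have : (β ^ k) x ∈ {y : Ω | ∃ k : ℤ, (β ^ k) x = y} := ⟨k, rfl⟩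
        rwa [hAorbit x hx] at this
      set C : SubMulAction H Ω :=
        { carrier := A
          smul_mem' := fun c {x} hx => hsmulmem c x hx } with hC
      haveI : MulAction.IsPretransitive H C := by
        constructor
        rintro ⟨x, hx⟩ ⟨z, hz⟩
        have hzmem : z ∈ {y : Ω | ∃ k : ℤ, (β ^ k) x = y} := by
          rw [hAorbit x hx]; exact hz
        obtain ⟨k, hk⟩ := hzmem
        refine ⟨⟨gβ ^ k, Subgroup.zpow_mem_zpowers gβ k⟩, ?_⟩
        have hval : ((gβ ^ k : G) : Equiv.Perm Ω) x = z := by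
          rw [hcoe_zpow]; exact hk
        exact Subtype.ext hval
      have hblock2 : MulAction.IsBlock H (Subtype.val ⁻¹' Λ' : Set C) :=
        (hΛ'block.subgroup).subtype_val_preimage
      have hpre_ne : (Subtype.val ⁻¹' Λ' : Set C).Nonempty :=
        ⟨⟨x₀, hx₀⟩, hx₀Λ'⟩
      have hdvd := hblock2.ncard_dvd_card hpre_ne
      have hcardC : Nat.card C = t + 1 := by
        have : Nat.card C = (A : Set Ω).ncard := (Nat.card_coe_set_eq _).symm
        rw [this, hAcard]
      rw [hcardC] at hdvd
      have himg : Subtype.val '' (Subtype.val ⁻¹' Λ' : Set C) = Λ' := by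
        apply Set.Subset.antisymm
        · rintro _ ⟨⟨w, hw⟩, hwΛ, rfl⟩
          exact hwΛ
        · intro w hw
          exact ⟨⟨w, hsub hw⟩, hw, rfl⟩
      have hncard_eq : (Subtype.val ⁻¹' Λ' : Set C).ncard = Λ'.ncard := by
        conv_rhs => rw [← himg]
        rw [Set.ncard_image_of_injective _ Subtype.val_injective]
      rwa [hncard_eq] at hdvd
    -- |Λ'| divides 2 = 2(t+1) - 2t
    have hdvd3 : Λ'.ncard ∣ 2 := by
      have h1 : Λ'.ncard ∣ 2 * (t + 1) := Dvd.dvd.mul_left hdvd2 2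
      have h2 := Nat.dvd_sub h1 hdvd1
      have h3 : 2 * (t + 1) - 2 * t = 2 := by omega
      rwa [h3] at h2
    have hone : Λ'.ncard = 1 := by
      rcases (Nat.dvd_prime Nat.prime_two).mp hdvd3 with h | h
      · exact h
      · exfalso
        rw [h] at hdvd2
        omega
    obtain ⟨a, ha⟩ := Set.ncard_eq_one.mp hone
    left
    rw [ha]
    exact Set.subsingleton_singleton
  · -- Case 2 : Λ' meets both A and B ; then Λ' = univ
    apply hnt'
    have hfix1 : (gβ ^ (t - 1) : G) • Λ' = Λ' := by
      apply hΛ'block.smul_eq_of_mem hb₀Λ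
      rw [hsmul, hcoe_pow]
      rw [hfixB b₀ hb₀B]
      exact hb₀Λ
    have hfix2 : (gβ ^ (t + 1) : G) • Λ' = Λ' := by
      apply hΛ'block.smul_eq_of_mem ha₀Λ
      rw [hsmul, hcoe_pow]
      rw [hfixA a₀ ha₀A]
      exact ha₀Λ
    have hAsub : A ⊆ Λ' := by
      intro x hx
      obtain ⟨k, hk⟩ := htransA x₀ hx₀ x hx
      have hmem : (gβ ^ (t - 1)) ^ k ∈ MulAction.stabilizer G Λ' :=
        Subgroup.zpow_mem _ (MulAction.mem_stabilizer_iff.mpr hfix1) k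
      have : ((gβ ^ (t - 1)) ^ k : G) • Λ' = Λ' := hmem
      have hxeq : (((gβ ^ (t - 1)) ^ k : G)) • x₀ = x := by
        rw [hsmul, hcoe_zpow]
        exact hk
      rw [← this]
      exact ⟨x₀, hx₀Λ', hxeq⟩
    have hBsub : B ⊆ Λ' := by
      intro x hx
      obtain ⟨k, hk⟩ := htransB b₀ hb₀B x hx
      have hmem : (gβ ^ (t + 1)) ^ k ∈ MulAction.stabilizer G Λ' :=
        Subgroup.zpow_mem _ (MulAction.mem_stabilizer_iff.mpr hfix2) k
      have : ((gβ ^ (t + 1)) ^ k : G) • Λ' = Λ' := hmem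
      have hxeq : (((gβ ^ (t + 1)) ^ k : G)) • b₀ = x := by
        rw [hsmul, hcoe_zpow]
        exact hk
      rw [← this]
      exact ⟨b₀, hb₀Λ, hxeq⟩
    right
    apply Set.eq_univ_of_univ_subset
    rw [← hunion]
    exact Set.union_subset hAsub hBsub
end

section
/- Let d = 2k+1 with k > 0 and let λ, β ∈ Σ_d with λ the (k+1)-cycle (k+1 ... 2k+1) and β as above (β(i)=2k+2-i for i≤k, β(k+1)=k+1, β(i)=i-k-1 for i≥k+2). Then the group ⟨λ, β⟩ is a transitive and primitive permutation group on {1,...,d}. -/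
open Pointwise


/-- Let `d = 2k+1` with `k > 0`, let `λ` be the `(k+1)`-cycle `(k+1 k+2 … 2k+1)`
and let `β` be given by `β(i) = 2k+2-i` for `1 ≤ i ≤ k`, `β(k+1) = k+1`, and
`β(i) = i-k-1` for `k+2 ≤ i ≤ 2k+1` (points `1,…,d` encoded as `Fin d`, point
`p` being the index `p - 1`).  Then `⟨λ, β⟩` is a transitive and primitive
permutation group on the `d` points. -/
theorem stmt_13 (k d : ℕ) (hk : 0 < k) (hd : d = 2 * k + 1)
    (lam β : Equiv.Perm (Fin d))
    (hl₁ : ∀ i : Fin d, (i : ℕ) < k → lam i = i)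
    (hl₂ : ∀ i : Fin d, k ≤ (i : ℕ) → (i : ℕ) < 2 * k → (lam i : ℕ) = (i : ℕ) + 1)
    (hl₃ : ∀ i : Fin d, (i : ℕ) = 2 * k → (lam i : ℕ) = k)
    (hb₁ : ∀ i : Fin d, (i : ℕ) < k → (β i : ℕ) = 2 * k - (i : ℕ))
    (hb₂ : ∀ i : Fin d, (i : ℕ) = k → β i = i)
    (hb₃ : ∀ i : Fin d, k < (i : ℕ) → (β i : ℕ) = (i : ℕ) - k - 1) :
    MulAction.IsPretransitive (Subgroup.closure ({lam, β} : Set (Equiv.Perm (Fin d)))) (Fin d) ∧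
      ∀ B : Set (Fin d),
        MulAction.IsBlock (Subgroup.closure ({lam, β} : Set (Equiv.Perm (Fin d)))) B →
        B.Nonempty → MulAction.IsTrivialBlock B := by
  subst hd
  set G := Subgroup.closure ({lam, β} : Set (Equiv.Perm (Fin (2 * k + 1)))) with hG
  have hlamG : lam ∈ G := Subgroup.subset_closure (by simp)
  have hbG : β ∈ G := Subgroup.subset_closure (by simp)
  set L : G := ⟨lam, hlamG⟩ with hL
  set Bt : G := ⟨β, hbG⟩ with hBt
  have hdpos : k < 2 * k + 1 := by omega
  set pk : Fin (2 * k + 1) := ⟨k, hdpos⟩ with hpk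
  have hsmul : ∀ (u : G) (x : Fin (2 * k + 1)), u • x = (u : Equiv.Perm (Fin (2 * k + 1))) x :=
    fun u x => rfl
  -- powers of lam on pk
  have hpow : ∀ j, j ≤ k → (((lam ^ j) pk : Fin (2 * k + 1)) : ℕ) = k + j := by
    intro j
    induction j with
    | zero => intro _; simp [hpk]
    | succ n ih =>
      intro h
      have hn : ((lam ^ n) pk : ℕ) = k + n := ih (by omega)
      rw [pow_succ', Equiv.Perm.mul_apply]
      rw [hl₂ ((lam ^ n) pk) (by omega) (by omega), hn]
      omega
  -- from pk to any point
  have hreach : ∀ y : Fin (2 * k + 1), ∃ g : G, g • pk = y := by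
    intro y
    rcases lt_or_ge (y : ℕ) k with hy | hy
    · refine ⟨Bt * L ^ ((y : ℕ) + 1), ?_⟩
      have hcoe : ((Bt * L ^ ((y : ℕ) + 1) : G) : Equiv.Perm (Fin (2 * k + 1)))
          = β * lam ^ ((y : ℕ) + 1) := by
        push_cast [hBt, hL]; rfl
      rw [hsmul, hcoe, Equiv.Perm.mul_apply]
      have h1 : ((lam ^ ((y : ℕ) + 1)) pk : ℕ) = k + ((y : ℕ) + 1) := hpow _ (by omega)
      have h2 := hb₃ ((lam ^ ((y : ℕ) + 1)) pk) (by omega)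
      exact Fin.ext (by omega)
    · refine ⟨L ^ ((y : ℕ) - k), ?_⟩
      have hcoe : ((L ^ ((y : ℕ) - k) : G) : Equiv.Perm (Fin (2 * k + 1)))
          = lam ^ ((y : ℕ) - k) := by push_cast [hL]; rfl
      rw [hsmul, hcoe]
      have hyk : (y : ℕ) - k ≤ k := by have := y.isLt; omega
      have h1 := hpow _ hyk
      exact Fin.ext (by omega)
  have htrans : MulAction.IsPretransitive G (Fin (2 * k + 1)) := by
    constructor
    intro x y
    obtain ⟨gx, hgx⟩ := hreach x
    obtain ⟨gy, hgy⟩ := hreach y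
    refine ⟨gy * gx⁻¹, ?_⟩
    rw [mul_smul, ← hgx, inv_smul_smul, hgy]
  refine ⟨htrans, ?_⟩
  intro B hB hBne
  by_cases hsub : B.Subsingleton
  · exact Or.inl hsub
  · right
    rw [Set.not_subsingleton_iff] at hsub
    obtain ⟨a, ha, b, hb, hab⟩ := hsub
    obtain ⟨g, hg⟩ := htrans.exists_smul_eq a pk
    set B' : Set (Fin (2 * k + 1)) := g • B with hB'def
    have hB' : MulAction.IsBlock G B' := hB.translate g
    have hpkB' : pk ∈ B' := by
      rw [← hg]; exact Set.smul_mem_smul_set ha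
    have hgbB' : g • b ∈ B' := Set.smul_mem_smul_set hb
    have hgbne : g • b ≠ pk := by
      rw [← hg]; intro h; exact hab (smul_left_cancel g h).symm
    -- β fixes pk, hence β • B' = B'
    have hbfix : Bt • B' = B' := by
      apply hB'.smul_eq_of_mem hpkB'
      have : Bt • pk = pk := by rw [hsmul]; exact hb₂ pk rfl
      rwa [this]
    have hbmem : ∀ x ∈ B', β x ∈ B' := by
      intro x hx
      have := Set.smul_mem_smul_set (a := Bt) (b := x) (s := B') hx
      rwa [hbfix, hsmul] at this
    -- B' contains a point with value < k
    have hjex : ∃ j ∈ B', (j : ℕ) < k := by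
      rcases lt_trichotomy ((g • b : Fin (2 * k + 1)) : ℕ) k with h | h | h
      · exact ⟨g • b, hgbB', h⟩
      · exact absurd (Fin.ext h : g • b = pk) hgbne
      · refine ⟨β (g • b), hbmem _ hgbB', ?_⟩
        have h2 := hb₃ (g • b) h
        have := (g • b : Fin (2 * k + 1)).isLt
        omega
    obtain ⟨j, hjB', hjk⟩ := hjex
    -- lam fixes j, hence lam • B' = B'
    have hlfix : L • B' = B' := by
      apply hB'.smul_eq_of_mem hjB'
      have : L • j = j := by rw [hsmul]; exact hl₁ j hjk
      rwa [this]
    have hlmem : ∀ x ∈ B', lam x ∈ B' := by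
      intro x hx
      have := Set.smul_mem_smul_set (a := L) (b := x) (s := B') hx
      rwa [hlfix, hsmul] at this
    -- all lam-powers of pk are in B'
    have hpowmem : ∀ m, (lam ^ m) pk ∈ B' := by
      intro m
      induction m with
      | zero => simpa using hpkB'
      | succ n ih =>
        rw [pow_succ', Equiv.Perm.mul_apply]
        exact hlmem _ ih
    have huniv : ∀ x : Fin (2 * k + 1), x ∈ B' := by
      intro x
      rcases lt_or_ge (x : ℕ) k with hx | hx
      · have hmem := hbmem _ (hpowmem ((x : ℕ) + 1))
        have h1 : ((lam ^ ((x : ℕ) + 1)) pk : ℕ) = k + ((x : ℕ) + 1) := hpow _ (by omega)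
        have h2 := hb₃ ((lam ^ ((x : ℕ) + 1)) pk) (by omega)
        have hx' : β ((lam ^ ((x : ℕ) + 1)) pk) = x := Fin.ext (by omega)
        rwa [hx'] at hmem
      · have h1 := hpow ((x : ℕ) - k) (by have := x.isLt; omega)
        have hx' : (lam ^ ((x : ℕ) - k)) pk = x := Fin.ext (by omega)
        rw [← hx']; exact hpowmem _
    have hB'univ : B' = Set.univ := Set.eq_univ_iff_forall.mpr huniv
    have : B = g⁻¹ • B' := by rw [hB'def, inv_smul_smul]
    rw [this, hB'univ, Set.smul_set_univ]
end
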